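/- arXiv:2605.01274 — 2 statements merged into one kernel-verified Lean document; each statement's English description precedes it below -/
import Mathlib

section
/- Let L > 0, T > 0, m > 0, and let Ψ₁, Ψ₂ : [0,L]×[0,T] → ℂ be continuously differentiable and satisfy i ∂ₜΨ₁ = −i ∂ₓΨ₁ + m Ψ₂ and i ∂ₜΨ₂ = i ∂ₓΨ₂ + m Ψ₁. For k ∈ ℂ and s ∈ [0,T] write Ψ̂ₗ(k,s) = ∫_0^L e^{−ikx} Ψₗ(x,s) dx, B_L,ₗ(Ω,t) = ∫_0^t e^{Ωs} Ψₗ(L,s) ds and B₀,ₗ(Ω,t) = ∫_0^t e^{Ωs} Ψₗ(0,s) ds (l = 1,2). Then for every k ∈ ℂ, every Ω ∈ ℂ with Ω² = −(k²+m²), and every t ∈ [0,T]: i m Ψ̂₁(k,0) + (Ω − ik) Ψ̂₂(k,0) − i m e^{−ikL} B_L,₁(Ω,t) + (Ω − ik) e^{−ikL} B_L,₂(Ω,t) − i m e^{Ωt} Ψ̂₁(k,t) + (ik − Ω) e^{Ωt} Ψ̂₂(k,t) + i m B₀,₁(Ω,t) + (ik − Ω) B₀,₂(Ω,t) = 0.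 -/
/-!
Multiplying the Dirac system by the plane wave `e^{-ikx + Ωt}` and combining the two equations
with the coefficients `(im, Ω - ik)` and `(im, ik - Ω)` puts it in divergence form
`∂ₜ(e^{-ikx+Ωt} (imΨ₁ + (Ω - ik)Ψ₂)) + ∂ₓ(e^{-ikx+Ωt} (imΨ₁ + (ik - Ω)Ψ₂)) = 0`; this uses
the dispersion relation `Ω² = -(k² + m²)`. The divergence theorem on `[0,L] × [0,t]` turns
this local relation into the vanishing of the boundary integral, which is the global relation.
-/

open Set MeasureTheory Complex
open scoped Interval Topology

section Slices

variable {E : Type*} [NormedAddCommGroup E] {f : ℝ × ℝ → E} {s t : Set ℝ} {x y : ℝ}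

theorem ContinuousOn.intervalIntegrable_fst_slice (hf : ContinuousOn f (s ×ˢ t)) {a b : ℝ}
    (hab : [[a, b]] ⊆ s) (hy : y ∈ t) :
    IntervalIntegrable (fun r => f (r, y)) volume a b :=
  (hf.comp (Continuous.continuousOn (by fun_prop)) fun _ hr => ⟨hab hr, hy⟩).intervalIntegrable

theorem ContinuousOn.intervalIntegrable_snd_slice (hf : ContinuousOn f (s ×ˢ t)) {a b : ℝ}
    (hab : [[a, b]] ⊆ t) (hx : x ∈ s) :
    IntervalIntegrable (fun r => f (x, r)) volume a b :=
  (hf.comp (Continuous.continuousOn (by fun_prop)) fun _ hr => ⟨hx, hab hr⟩).intervalIntegrable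

variable [NormedSpace ℝ E]

theorem DifferentiableWithinAt.hasDerivWithinAt_fst_slice
    (hf : DifferentiableWithinAt ℝ f (s ×ˢ t) (x, y)) (hy : y ∈ t) :
    HasDerivWithinAt (fun r => f (r, y)) (fderivWithin ℝ f (s ×ˢ t) (x, y) (1, 0)) s x :=
  hf.hasFDerivWithinAt.comp_hasDerivWithinAt x
    ((hasDerivWithinAt_id x s).prodMk (hasDerivWithinAt_const x s y))
    fun r hr => show (r, y) ∈ s ×ˢ t from ⟨hr, hy⟩

theorem DifferentiableWithinAt.hasDerivWithinAt_snd_slice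
    (hf : DifferentiableWithinAt ℝ f (s ×ˢ t) (x, y)) (hx : x ∈ s) :
    HasDerivWithinAt (fun r => f (x, r)) (fderivWithin ℝ f (s ×ˢ t) (x, y) (0, 1)) t y :=
  hf.hasFDerivWithinAt.comp_hasDerivWithinAt y
    ((hasDerivWithinAt_const y t x).prodMk (hasDerivWithinAt_id y t))
    fun r hr => show (x, r) ∈ s ×ˢ t from ⟨hx, hr⟩

theorem HasDerivWithinAt.fderivWithin_prod_apply_one_zero {f' : E}
    (h : HasDerivWithinAt (fun r => f (r, y)) f' s x)
    (hf : DifferentiableWithinAt ℝ f (s ×ˢ t) (x, y)) (hy : y ∈ t)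
    (hs : UniqueDiffWithinAt ℝ s x) : fderivWithin ℝ f (s ×ˢ t) (x, y) (1, 0) = f' :=
  hs.eq_deriv s (hf.hasDerivWithinAt_fst_slice hy) h

theorem HasDerivWithinAt.fderivWithin_prod_apply_zero_one {f' : E}
    (h : HasDerivWithinAt (fun r => f (x, r)) f' t y)
    (hf : DifferentiableWithinAt ℝ f (s ×ˢ t) (x, y)) (hx : x ∈ s)
    (ht : UniqueDiffWithinAt ℝ t y) : fderivWithin ℝ f (s ×ˢ t) (x, y) (0, 1) = f' :=
  ht.eq_deriv t (hf.hasDerivWithinAt_snd_slice hx) h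

end Slices

theorem integral2_boundary_eq_zero_of_divergence_eq_zero {E : Type*} [NormedAddCommGroup E]
    [NormedSpace ℝ E] {f g : ℝ × ℝ → E} {D : Set (ℝ × ℝ)} {a₁ a₂ b₁ b₂ : ℝ}
    (hD : [[a₁, b₁]] ×ˢ [[a₂, b₂]] ⊆ D) (hf : DifferentiableOn ℝ f D)
    (hg : DifferentiableOn ℝ g D)
    (hdiv : ∀ p ∈ [[a₁, b₁]] ×ˢ [[a₂, b₂]],
      fderivWithin ℝ f D p (1, 0) + fderivWithin ℝ g D p (0, 1) = 0) :
    (∫ x in a₁..b₁, g (x, b₂)) - (∫ x in a₁..b₁, g (x, a₂)) + (∫ y in a₂..b₂, f (b₁, y))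
      - ∫ y in a₂..b₂, f (a₁, y) = 0 := by
  have hD_nhds : ∀ p ∈ Ioo (min a₁ b₁) (max a₁ b₁) ×ˢ Ioo (min a₂ b₂) (max a₂ b₂), D ∈ 𝓝 p :=
    fun p hp => Filter.mem_of_superset ((isOpen_Ioo.prod isOpen_Ioo).mem_nhds hp)
      ((prod_mono Ioo_subset_Icc_self Ioo_subset_Icc_self).trans hD)
  have hgreen := integral2_divergence_prod_of_hasFDerivAt f g (fderivWithin ℝ f D)
    (fderivWithin ℝ g D) a₁ a₂ b₁ b₂ (hf.continuousOn.mono hD) (hg.continuousOn.mono hD)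
    (fun p hp => (hf p (mem_of_mem_nhds (hD_nhds p hp))).hasFDerivWithinAt.hasFDerivAt
      (hD_nhds p hp))
    (fun p hp => (hg p (mem_of_mem_nhds (hD_nhds p hp))).hasFDerivWithinAt.hasFDerivAt
      (hD_nhds p hp))
    (integrableOn_zero.congr_fun (fun p hp => (hdiv p hp).symm)
      (measurableSet_uIcc.prod measurableSet_uIcc))
  have hzero : (∫ x in a₁..b₁, ∫ y in a₂..b₂,
      fderivWithin ℝ f D (x, y) (1, 0) + fderivWithin ℝ g D (x, y) (0, 1)) = 0 := by
    refine (intervalIntegral.integral_congr fun x hx => ?_).trans intervalIntegral.integral_zero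
    exact (intervalIntegral.integral_congr fun y hy => hdiv (x, y) ⟨hx, hy⟩).trans
      intervalIntegral.integral_zero
  rw [← hgreen, hzero]

noncomputable def planeWaveComb (α β c₁ c₂ : ℂ) (Ψ₁ Ψ₂ : ℝ × ℝ → ℂ) (p : ℝ × ℝ) : ℂ :=
  exp (α * p.1) * exp (β * p.2) * (c₁ * Ψ₁ p + c₂ * Ψ₂ p)

section PlaneWaveComb

variable {α β c₁ c₂ : ℂ} {Ψ₁ Ψ₂ : ℝ × ℝ → ℂ}

theorem differentiableWithinAt_planeWaveComb {D : Set (ℝ × ℝ)} {p : ℝ × ℝ}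
    (h₁ : DifferentiableWithinAt ℝ Ψ₁ D p) (h₂ : DifferentiableWithinAt ℝ Ψ₂ D p) :
    DifferentiableWithinAt ℝ (planeWaveComb α β c₁ c₂ Ψ₁ Ψ₂) D p := by
  unfold planeWaveComb
  fun_prop

theorem hasDerivAt_cexp_mul_ofReal (α : ℂ) (x : ℝ) :
    HasDerivAt (fun r : ℝ => exp (α * r)) (exp (α * x) * α) x := by
  simpa using (((hasDerivAt_id (x : ℂ)).const_mul α).cexp).comp_ofReal

theorem hasDerivWithinAt_planeWaveComb_fst_slice {s : Set ℝ} {x y : ℝ} {d₁ d₂ : ℂ}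
    (h₁ : HasDerivWithinAt (fun r => Ψ₁ (r, y)) d₁ s x)
    (h₂ : HasDerivWithinAt (fun r => Ψ₂ (r, y)) d₂ s x) :
    HasDerivWithinAt (fun r => planeWaveComb α β c₁ c₂ Ψ₁ Ψ₂ (r, y))
      (exp (α * x) * exp (β * y) *
        (α * (c₁ * Ψ₁ (x, y) + c₂ * Ψ₂ (x, y)) + (c₁ * d₁ + c₂ * d₂))) s x :=
  (((hasDerivAt_cexp_mul_ofReal α x).hasDerivWithinAt.mul_const (exp (β * y))).mul
    ((h₁.const_mul c₁).add (h₂.const_mul c₂))).congr_deriv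
      (by simp only [Pi.add_apply]; ring)

theorem hasDerivWithinAt_planeWaveComb_snd_slice {t : Set ℝ} {x y : ℝ} {d₁ d₂ : ℂ}
    (h₁ : HasDerivWithinAt (fun r => Ψ₁ (x, r)) d₁ t y)
    (h₂ : HasDerivWithinAt (fun r => Ψ₂ (x, r)) d₂ t y) :
    HasDerivWithinAt (fun r => planeWaveComb α β c₁ c₂ Ψ₁ Ψ₂ (x, r))
      (exp (α * x) * exp (β * y) *
        (β * (c₁ * Ψ₁ (x, y) + c₂ * Ψ₂ (x, y)) + (c₁ * d₁ + c₂ * d₂))) t y :=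
  (((hasDerivAt_cexp_mul_ofReal β y).hasDerivWithinAt.const_mul (exp (α * x))).mul
    ((h₁.const_mul c₁).add (h₂.const_mul c₂))).congr_deriv
      (by simp only [Pi.add_apply]; ring)

variable {s t : Set ℝ} {a b : ℝ}

theorem integral_planeWaveComb_fst_slice {y : ℝ} (h₁ : ContinuousOn Ψ₁ (s ×ˢ t))
    (h₂ : ContinuousOn Ψ₂ (s ×ˢ t)) (hab : [[a, b]] ⊆ s) (hy : y ∈ t) :
    ∫ x in a..b, planeWaveComb α β c₁ c₂ Ψ₁ Ψ₂ (x, y) =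
      c₁ * exp (β * y) * (∫ x in a..b, exp (α * x) * Ψ₁ (x, y))
        + c₂ * exp (β * y) * (∫ x in a..b, exp (α * x) * Ψ₂ (x, y)) := by
  have hint : ∀ Ψ : ℝ × ℝ → ℂ, ContinuousOn Ψ (s ×ˢ t) →
      IntervalIntegrable (fun x : ℝ => exp (α * x) * Ψ (x, y)) volume a b := fun Ψ hΨ =>
    ((Continuous.continuousOn (f := fun p : ℝ × ℝ => exp (α * p.1)) (by fun_prop)).mul
      hΨ).intervalIntegrable_fst_slice hab hy
  rw [← intervalIntegral.integral_const_mul, ← intervalIntegral.integral_const_mul,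
    ← intervalIntegral.integral_add ((hint Ψ₁ h₁).const_mul _) ((hint Ψ₂ h₂).const_mul _)]
  exact intervalIntegral.integral_congr fun x _ => by simp only [planeWaveComb]; ring

theorem integral_planeWaveComb_snd_slice {x : ℝ} (h₁ : ContinuousOn Ψ₁ (s ×ˢ t))
    (h₂ : ContinuousOn Ψ₂ (s ×ˢ t)) (hab : [[a, b]] ⊆ t) (hx : x ∈ s) :
    ∫ y in a..b, planeWaveComb α β c₁ c₂ Ψ₁ Ψ₂ (x, y) =
      c₁ * exp (α * x) * (∫ y in a..b, exp (β * y) * Ψ₁ (x, y))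
        + c₂ * exp (α * x) * (∫ y in a..b, exp (β * y) * Ψ₂ (x, y)) := by
  have hint : ∀ Ψ : ℝ × ℝ → ℂ, ContinuousOn Ψ (s ×ˢ t) →
      IntervalIntegrable (fun y : ℝ => exp (β * y) * Ψ (x, y)) volume a b := fun Ψ hΨ =>
    ((Continuous.continuousOn (f := fun p : ℝ × ℝ => exp (β * p.2)) (by fun_prop)).mul
      hΨ).intervalIntegrable_snd_slice hab hx
  rw [← intervalIntegral.integral_const_mul, ← intervalIntegral.integral_const_mul,
    ← intervalIntegral.integral_add ((hint Ψ₁ h₁).const_mul _) ((hint Ψ₂ h₂).const_mul _)]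
  exact intervalIntegral.integral_congr fun y _ => by simp only [planeWaveComb]; ring

end PlaneWaveComb

theorem dirac_planeWaveComb_divergence_eq_zero {s t : Set ℝ} {x y : ℝ} {m k Ω : ℂ}
    {Ψ₁ Ψ₂ : ℝ × ℝ → ℂ} (hs : UniqueDiffWithinAt ℝ s x) (ht : UniqueDiffWithinAt ℝ t y)
    (hx : x ∈ s) (hy : y ∈ t) (h₁ : DifferentiableWithinAt ℝ Ψ₁ (s ×ˢ t) (x, y))
    (h₂ : DifferentiableWithinAt ℝ Ψ₂ (s ×ˢ t) (x, y))
    (pde₁ : I * derivWithin (fun r => Ψ₁ (x, r)) t y =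
      -I * derivWithin (fun r => Ψ₁ (r, y)) s x + m * Ψ₂ (x, y))
    (pde₂ : I * derivWithin (fun r => Ψ₂ (x, r)) t y =
      I * derivWithin (fun r => Ψ₂ (r, y)) s x + m * Ψ₁ (x, y))
    (hΩ : Ω ^ 2 = -(k ^ 2 + m ^ 2)) :
    fderivWithin ℝ (planeWaveComb (-I * k) Ω (I * m) (I * k - Ω) Ψ₁ Ψ₂) (s ×ˢ t) (x, y) (1, 0)
      + fderivWithin ℝ (planeWaveComb (-I * k) Ω (I * m) (Ω - I * k) Ψ₁ Ψ₂) (s ×ˢ t) (x, y)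
        (0, 1) = 0 := by
  have hd (c : ℂ) :
      DifferentiableWithinAt ℝ (planeWaveComb (-I * k) Ω (I * m) c Ψ₁ Ψ₂) (s ×ˢ t) (x, y) :=
    differentiableWithinAt_planeWaveComb h₁ h₂
  rw [(hasDerivWithinAt_planeWaveComb_fst_slice
      (h₁.hasDerivWithinAt_fst_slice hy).differentiableWithinAt.hasDerivWithinAt
      (h₂.hasDerivWithinAt_fst_slice hy).differentiableWithinAt.hasDerivWithinAt
      ).fderivWithin_prod_apply_one_zero (hd _) hy hs,
    (hasDerivWithinAt_planeWaveComb_snd_slice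
      (h₁.hasDerivWithinAt_snd_slice hx).differentiableWithinAt.hasDerivWithinAt
      (h₂.hasDerivWithinAt_snd_slice hx).differentiableWithinAt.hasDerivWithinAt
      ).fderivWithin_prod_apply_zero_one (hd _) hx ht]
  set e := exp (-I * k * x) * exp (Ω * y)
  linear_combination (e * m) * pde₁ + (e * (-I) * (Ω - I * k)) * pde₂ + (e * Ψ₂ (x, y)) * hΩ
    + (e * ((Ω - I * k) * (derivWithin (fun r => Ψ₂ (x, r)) t y
      - derivWithin (fun r => Ψ₂ (r, y)) s x) - k ^ 2 * Ψ₂ (x, y))) * I_sq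

theorem massive_dirac_global_relation_right_interval_general
    (L T m : ℝ) (hL : 0 < L) (hT : 0 < T)
    (Ψ₁ Ψ₂ : ℝ × ℝ → ℂ)
    (hΨ₁ : ContDiffOn ℝ 1 Ψ₁ (Set.Icc 0 L ×ˢ Set.Icc 0 T))
    (hΨ₂ : ContDiffOn ℝ 1 Ψ₂ (Set.Icc 0 L ×ˢ Set.Icc 0 T))
    (pde₁ : ∀ x ∈ Set.Icc (0:ℝ) L, ∀ t ∈ Set.Icc (0:ℝ) T,
        Complex.I * derivWithin (fun s : ℝ => Ψ₁ (x, s)) (Set.Icc 0 T) t =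
          -Complex.I * derivWithin (fun y : ℝ => Ψ₁ (y, t)) (Set.Icc 0 L) x
            + m * Ψ₂ (x, t))
    (pde₂ : ∀ x ∈ Set.Icc (0:ℝ) L, ∀ t ∈ Set.Icc (0:ℝ) T,
        Complex.I * derivWithin (fun s : ℝ => Ψ₂ (x, s)) (Set.Icc 0 T) t =
          Complex.I * derivWithin (fun y : ℝ => Ψ₂ (y, t)) (Set.Icc 0 L) x
            + m * Ψ₁ (x, t)) :
    ∀ (k Ω : ℂ), Ω ^ 2 = -(k ^ 2 + m ^ 2) → ∀ t ∈ Set.Icc (0:ℝ) T,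
      Complex.I * m * (∫ x in (0:ℝ)..L, Complex.exp (-Complex.I * k * x) * Ψ₁ (x, 0))
      + (Ω - Complex.I * k) *
          (∫ x in (0:ℝ)..L, Complex.exp (-Complex.I * k * x) * Ψ₂ (x, 0))
      - Complex.I * m * Complex.exp (-Complex.I * k * L) *
          (∫ s in (0:ℝ)..t, Complex.exp (Ω * s) * Ψ₁ (L, s))
      + (Ω - Complex.I * k) * Complex.exp (-Complex.I * k * L) *
          (∫ s in (0:ℝ)..t, Complex.exp (Ω * s) * Ψ₂ (L, s))
      - Complex.I * m * Complex.exp (Ω * t) *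
          (∫ x in (0:ℝ)..L, Complex.exp (-Complex.I * k * x) * Ψ₁ (x, t))
      + (Complex.I * k - Ω) * Complex.exp (Ω * t) *
          (∫ x in (0:ℝ)..L, Complex.exp (-Complex.I * k * x) * Ψ₂ (x, t))
      + Complex.I * m * (∫ s in (0:ℝ)..t, Complex.exp (Ω * s) * Ψ₁ (0, s))
      + (Complex.I * k - Ω) * (∫ s in (0:ℝ)..t, Complex.exp (Ω * s) * Ψ₂ (0, s)) = 0 := by
  intro k Ω hΩ t ht
  have hx : [[0, L]] ⊆ Icc 0 L := (uIcc_of_le hL.le).subset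
  have hy : [[0, t]] ⊆ Icc 0 T := (uIcc_of_le ht.1).trans_subset (Icc_subset_Icc_right ht.2)
  have hsub := prod_mono hx hy
  have hd₁ := hΨ₁.differentiableOn one_ne_zero
  have hd₂ := hΨ₂.differentiableOn one_ne_zero
  have green := integral2_boundary_eq_zero_of_divergence_eq_zero hsub
    (fun p hp => differentiableWithinAt_planeWaveComb (hd₁ p hp) (hd₂ p hp))
    (fun p hp => differentiableWithinAt_planeWaveComb (hd₁ p hp) (hd₂ p hp))
    fun ⟨x, y⟩ hp => dirac_planeWaveComb_divergence_eq_zero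
      (uniqueDiffOn_Icc hL x (hsub hp).1) (uniqueDiffOn_Icc hT y (hsub hp).2)
      (hsub hp).1 (hsub hp).2 (hd₁ _ (hsub hp)) (hd₂ _ (hsub hp))
      (pde₁ x (hsub hp).1 y (hsub hp).2) (pde₂ x (hsub hp).1 y (hsub hp).2) hΩ
  have hc₁ := hΨ₁.continuousOn
  have hc₂ := hΨ₂.continuousOn
  rw [integral_planeWaveComb_fst_slice hc₁ hc₂ hx ht,
    integral_planeWaveComb_fst_slice hc₁ hc₂ hx ⟨le_rfl, hT.le⟩,
    integral_planeWaveComb_snd_slice hc₁ hc₂ hy ⟨hL.le, le_rfl⟩,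
    integral_planeWaveComb_snd_slice hc₁ hc₂ hy ⟨le_rfl, hL.le⟩] at green
  simp only [ofReal_zero, mul_zero, exp_zero, mul_one] at green
  linear_combination -green

/-- Global relation (via Green's theorem) for a continuously differentiable solution of
the massive Dirac system on the rectangle `[0,L] × [0,T]`, for any branch `Ω` of the
dispersion relation `Ω² = -(k² + m²)`. -/
theorem massive_dirac_global_relation_right_interval
    (L T m : ℝ) (hL : 0 < L) (hT : 0 < T) (hm : 0 < m)
    (Ψ₁ Ψ₂ : ℝ × ℝ → ℂ)
    (hΨ₁ : ContDiffOn ℝ 1 Ψ₁ (Set.Icc 0 L ×ˢ Set.Icc 0 T))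
    (hΨ₂ : ContDiffOn ℝ 1 Ψ₂ (Set.Icc 0 L ×ˢ Set.Icc 0 T))
    (pde₁ : ∀ x ∈ Set.Icc (0:ℝ) L, ∀ t ∈ Set.Icc (0:ℝ) T,
        Complex.I * derivWithin (fun s : ℝ => Ψ₁ (x, s)) (Set.Icc 0 T) t =
          -Complex.I * derivWithin (fun y : ℝ => Ψ₁ (y, t)) (Set.Icc 0 L) x
            + m * Ψ₂ (x, t))
    (pde₂ : ∀ x ∈ Set.Icc (0:ℝ) L, ∀ t ∈ Set.Icc (0:ℝ) T,
        Complex.I * derivWithin (fun s : ℝ => Ψ₂ (x, s)) (Set.Icc 0 T) t =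
          Complex.I * derivWithin (fun y : ℝ => Ψ₂ (y, t)) (Set.Icc 0 L) x
            + m * Ψ₁ (x, t)) :
    ∀ (k Ω : ℂ), Ω ^ 2 = -(k ^ 2 + m ^ 2) → ∀ t ∈ Set.Icc (0:ℝ) T,
      Complex.I * m * (∫ x in (0:ℝ)..L, Complex.exp (-Complex.I * k * x) * Ψ₁ (x, 0))
      + (Ω - Complex.I * k) *
          (∫ x in (0:ℝ)..L, Complex.exp (-Complex.I * k * x) * Ψ₂ (x, 0))
      - Complex.I * m * Complex.exp (-Complex.I * k * L) *
          (∫ s in (0:ℝ)..t, Complex.exp (Ω * s) * Ψ₁ (L, s))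
      + (Ω - Complex.I * k) * Complex.exp (-Complex.I * k * L) *
          (∫ s in (0:ℝ)..t, Complex.exp (Ω * s) * Ψ₂ (L, s))
      - Complex.I * m * Complex.exp (Ω * t) *
          (∫ x in (0:ℝ)..L, Complex.exp (-Complex.I * k * x) * Ψ₁ (x, t))
      + (Complex.I * k - Ω) * Complex.exp (Ω * t) *
          (∫ x in (0:ℝ)..L, Complex.exp (-Complex.I * k * x) * Ψ₂ (x, t))
      + Complex.I * m * (∫ s in (0:ℝ)..t, Complex.exp (Ω * s) * Ψ₁ (0, s))
      + (Complex.I * k - Ω) * (∫ s in (0:ℝ)..t, Complex.exp (Ω * s) * Ψ₂ (0, s)) = 0 :=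
  massive_dirac_global_relation_right_interval_general L T m hL hT Ψ₁ Ψ₂ hΨ₁ hΨ₂ pde₁ pde₂
end

section
/- Let T > 0 and let Ψ₁, Ψ₂ : (−∞,0]×[0,T] → ℂ be continuously differentiable with ∂ₜΨ₁ + ∂ₓΨ₁ = 0 and ∂ₜΨ₂ − ∂ₓΨ₂ = 0 (the massless Dirac system i ∂ₜΨ₁ = −i ∂ₓΨ₁, i ∂ₜΨ₂ = i ∂ₓΨ₂). Assume that for l = 1,2, Ψₗ(·,s) and ∂ₓΨₗ(·,s) are integrable on (−∞,0] for each s ∈ [0,T], Ψₗ(x,s) → 0 as x → −∞, and |∂ₜΨₗ(x,s)| is dominated uniformly for s ∈ [0,T] by an integrable function of x. Then for every k ∈ ℂ with Im k ≥ 0 and every t ∈ [0,T]: (i) ∫_{−∞}^0 e^{−ikx} Ψ₁(x,0) dx − e^{ikt} ∫_{−∞}^0 e^{−ikx} Ψ₁(x,t) dx − ∫_0^t e^{iks} Ψ₁(0,s) ds = 0; and (ii) ∫_{−∞}^0 e^{−ikx} Ψ₂(x,0) dx − e^{−ikt} ∫_{−∞}^0 e^{−ikx} Ψ₂(x,t)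 dx + ∫_0^t e^{−iks} Ψ₂(0,s) ds = 0. -/
/-!
Both relations are instances of one identity for a transport equation `∂ₜΨ + c ∂ₓΨ = 0`.
Put `w = c i k`. For fixed `x`, the fundamental theorem of calculus in time gives
`e^{wt} Ψ(x,t) - Ψ(x,0) = ∫₀ᵗ e^{ws} (wΨ + ∂ₜΨ)(x,s) ds`. Integrate this against `e^{-ikx}` over
the half-line and swap the integrals; the swap is justified because the mean value theorem
dominates `Ψ(x,s)` by `|Ψ(x,0)| + T g(x)`. By the PDE, the inner `x`-integrand is
`-c ∂ₓ(e^{-ikx} Ψ)`. Since `|e^{-ikx}| ≤ 1` for `Im k ≥ 0` and `x ≤ 0`, and `Ψ` decays at `-∞`,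
this inner integral equals `-c Ψ(0,s)`.
-/

open MeasureTheory Filter Set Complex Topology

noncomputable def fourierIic (k : ℂ) (f : ℝ → ℂ) : ℂ := ∫ x in Iic (0:ℝ), cexp (-I * k * x) * f x

lemma norm_cexp_neg_I_mul_le_one {k : ℂ} (hk : 0 ≤ k.im) {x : ℝ} (hx : x ≤ 0) :
    ‖cexp (-I * k * x)‖ ≤ 1 := by
  rw [norm_exp, Real.exp_le_one_iff]
  have hre : (-I * k * x).re = k.im * x := by simp [mul_re]
  rw [hre]
  exact mul_nonpos_of_nonneg_of_nonpos hk hx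

lemma integrableOn_Iic_cexp_mul {k : ℂ} (hk : 0 ≤ k.im) {f : ℝ → ℂ}
    (hf : IntegrableOn f (Iic 0)) :
    IntegrableOn (fun x : ℝ => cexp (-I * k * x) * f x) (Iic 0) :=
  hf.bdd_mul (by fun_prop : Continuous fun x : ℝ => cexp (-I * k * x)).aestronglyMeasurable
    (by filter_upwards [ae_restrict_mem measurableSet_Iic] with x hx
        using norm_cexp_neg_I_mul_le_one hk hx)

theorem integral_Iic_cexp_mul_deriv_sub {k : ℂ} (hk : 0 ≤ k.im) {f f' : ℝ → ℂ}
    (hf0 : ContinuousWithinAt f (Iic 0) 0) (hderiv : ∀ x ∈ Iio 0, HasDerivAt f (f' x) x)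
    (hf : IntegrableOn f (Iic 0)) (hf' : IntegrableOn f' (Iic 0))
    (hlim : Tendsto f atBot (𝓝 0)) :
    ∫ x in Iic (0:ℝ), cexp (-I * k * x) * (f' x - I * k * f x) = f 0 := by
  have hexp : ∀ x : ℝ,
      HasDerivAt (fun y : ℝ => cexp (-I * k * y)) (cexp (-I * k * x) * (-I * k)) x :=
    fun x => by simpa using ((hasDerivAt_id (x : ℂ)).const_mul (-I * k)).cexp.comp_ofReal
  have hlim' : Tendsto (fun x : ℝ => cexp (-I * k * x) * f x) atBot (𝓝 0) := by
    refine squeeze_zero_norm' ?_ (by simpa using hlim.norm)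
    filter_upwards [Iic_mem_atBot (0:ℝ)] with x hx
    rw [norm_mul]
    exact mul_le_of_le_one_left (norm_nonneg _) (norm_cexp_neg_I_mul_le_one hk hx)
  have hint : IntegrableOn (fun x => f' x - I * k * f x) (Iic 0) := hf'.sub (hf.const_mul (I * k))
  have hFTC := integral_Iic_of_hasDerivAt_of_tendsto (f := fun x : ℝ => cexp (-I * k * x) * f x)
    (f' := fun x : ℝ => cexp (-I * k * x) * (f' x - I * k * f x))
    ((hexp 0).continuousAt.continuousWithinAt.mul hf0)
    (fun x hx => ((hexp x).mul (hderiv x hx)).congr_deriv (by ring))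
    (integrableOn_Iic_cexp_mul hk hint) hlim'
  simpa using hFTC

section Slices

variable {E : Type*} [NormedAddCommGroup E] [NormedSpace ℝ E] {Ψ : ℝ × ℝ → E} {s u : Set ℝ}
  {x t : ℝ}

lemma DifferentiableOn.hasDerivWithinAt_derivWithin_slice_fst
    (hΨ : DifferentiableOn ℝ Ψ (s ×ˢ u)) (hx : x ∈ s) (ht : t ∈ u) :
    HasDerivWithinAt (fun y => Ψ (y, t)) (derivWithin (fun y => Ψ (y, t)) s x) s x :=
  ((hΨ.comp (differentiableOn_id.prodMk (differentiableOn_const t)) fun _ hy => ⟨hy, ht⟩)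
    x hx).hasDerivWithinAt

lemma DifferentiableOn.hasDerivWithinAt_derivWithin_slice_snd
    (hΨ : DifferentiableOn ℝ Ψ (s ×ˢ u)) (hx : x ∈ s) (ht : t ∈ u) :
    HasDerivWithinAt (fun r => Ψ (x, r)) (derivWithin (fun r => Ψ (x, r)) u t) u t :=
  ((hΨ.comp ((differentiableOn_const x).prodMk differentiableOn_id) fun _ hr => ⟨hx, hr⟩)
    t ht).hasDerivWithinAt

lemma ContDiffOn.continuousOn_derivWithin_slice_snd (hΨ : ContDiffOn ℝ 1 Ψ (s ×ˢ u))
    (hs : UniqueDiffOn ℝ s) (hu : UniqueDiffOn ℝ u) :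
    ContinuousOn (fun p : ℝ × ℝ => derivWithin (fun r => Ψ (p.1, r)) u p.2) (s ×ˢ u) := by
  refine ((hΨ.continuousOn_fderivWithin (hs.prod hu) le_rfl).clm_apply
    (continuousOn_const (c := ((0 : ℝ), (1 : ℝ))))).congr fun p hp => ?_
  have hslice : HasDerivWithinAt (fun r => Ψ (p.1, r))
      (fderivWithin ℝ Ψ (s ×ˢ u) p ((0 : ℝ), (1 : ℝ))) u p.2 :=
    ((hΨ.differentiableOn one_ne_zero) p hp).hasFDerivWithinAt.comp_hasDerivWithinAt p.2
      ((hasDerivAt_const p.2 p.1).prodMk (hasDerivAt_id p.2)).hasDerivWithinAt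
      fun r hr => (⟨hp.1, hr⟩ : (p.1, r) ∈ s ×ˢ u)
  exact hslice.derivWithin (hu _ hp.2)

end Slices

lemma norm_le_norm_add_mul_of_norm_hasDerivWithinAt_le {E : Type*} [NormedAddCommGroup E]
    [NormedSpace ℝ E] {f f' : ℝ → E} {a b C x : ℝ}
    (hf : ∀ y ∈ Icc a b, HasDerivWithinAt f (f' y) (Icc a b) y)
    (hC : ∀ y ∈ Icc a b, ‖f' y‖ ≤ C) (hx : x ∈ Icc a b) :
    ‖f x‖ ≤ ‖f a‖ + C * (b - a) := by
  have hC0 : 0 ≤ C := (norm_nonneg _).trans (hC a ⟨le_rfl, hx.1.trans hx.2⟩)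
  have hmvt := norm_image_sub_le_of_norm_deriv_le_segment' hf
    (fun y hy => hC y (Ico_subset_Icc_self hy)) x hx
  calc ‖f x‖ ≤ ‖f a‖ + ‖f x - f a‖ := norm_le_norm_add_norm_sub' _ _
    _ ≤ ‖f a‖ + C * (b - a) := by gcongr; exact hmvt.trans (by gcongr; exact hx.2)

lemma integral_cexp_mul_mul_add_deriv {f f' : ℝ → ℂ} {a b : ℝ} (hab : a ≤ b) (w : ℂ)
    (hf : ∀ s ∈ Icc a b, HasDerivWithinAt f (f' s) (Icc a b) s)
    (hf' : ContinuousOn f' (Icc a b)) :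
    ∫ s in a..b, cexp (w * s) * (w * f s + f' s) = cexp (w * b) * f b - cexp (w * a) * f a := by
  have hexp : ∀ s : ℝ, HasDerivAt (fun r : ℝ => cexp (w * r)) (cexp (w * s) * w) s :=
    fun s => by simpa using ((hasDerivAt_id (s : ℂ)).const_mul w).cexp.comp_ofReal
  have hexp_cont : ContinuousOn (fun r : ℝ => cexp (w * r)) (Icc a b) :=
    Continuous.continuousOn (by fun_prop)
  have hcont : ContinuousOn f (Icc a b) := fun s hs => (hf s hs).continuousWithinAt
  refine intervalIntegral.integral_eq_sub_of_hasDerivAt_of_le hab (hexp_cont.mul hcont)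
    (fun s hs => ?_)
    (ContinuousOn.intervalIntegrable_of_Icc hab
      (hexp_cont.mul ((hcont.const_smul w).add hf')))
  exact ((hexp s).mul ((hf s (Ioo_subset_Icc_self hs)).hasDerivAt
    (Icc_mem_nhds hs.1 hs.2))).congr_deriv (by ring)

lemma integrable_prod_of_continuousOn_of_norm_le {E : Type*} [NormedAddCommGroup E]
    {F : ℝ × ℝ → E} {s u : Set ℝ} (hs : MeasurableSet s) (hu : MeasurableSet u)
    (hu_fin : volume u ≠ ⊤) (hF : ContinuousOn F (s ×ˢ u)) {G : ℝ → ℝ}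
    (hG : IntegrableOn G s) (hFG : ∀ x ∈ s, ∀ y ∈ u, ‖F (x, y)‖ ≤ G x) :
    Integrable F ((volume.restrict s).prod (volume.restrict u)) := by
  have hone : Integrable (fun _ : ℝ => (1 : ℝ)) (volume.restrict u) :=
    integrable_const_iff.mpr (Or.inr (isFiniteMeasure_restrict.mpr hu_fin))
  rw [Measure.prod_restrict]
  refine Integrable.mono' (by simpa [Measure.prod_restrict] using hG.mul_prod hone)
    (hF.aestronglyMeasurable (hs.prod hu)) ?_
  filter_upwards [ae_restrict_mem (hs.prod hu)] with p hp
  exact hFG p.1 hp.1 p.2 hp.2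

theorem integral_Iic_cexp_mul_transport_eq {T : ℝ} {Ψ : ℝ × ℝ → ℂ}
    (hΨ : DifferentiableOn ℝ Ψ (Iic 0 ×ˢ Icc 0 T)) (c : ℂ) {k : ℂ} (hk : 0 ≤ k.im)
    {s : ℝ} (hs : s ∈ Icc 0 T)
    (pde : ∀ x ∈ Iic (0:ℝ), derivWithin (fun r : ℝ => Ψ (x, r)) (Icc 0 T) s
      + c * derivWithin (fun y : ℝ => Ψ (y, s)) (Iic 0) x = 0)
    (hint : IntegrableOn (fun x => Ψ (x, s)) (Iic 0))
    (hint_deriv : IntegrableOn (fun x => derivWithin (fun y : ℝ => Ψ (y, s)) (Iic 0) x) (Iic 0))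
    (hdecay : Tendsto (fun x => Ψ (x, s)) atBot (𝓝 0)) :
    ∫ x in Iic (0:ℝ), cexp (-I * k * x) *
        (c * I * k * Ψ (x, s) + derivWithin (fun r : ℝ => Ψ (x, r)) (Icc 0 T) s)
      = -c * Ψ (0, s) := by
  rw [← integral_Iic_cexp_mul_deriv_sub hk (f := fun x => Ψ (x, s))
    (hΨ.continuousOn.comp (Continuous.continuousOn (f := fun x : ℝ => (x, s)) (by fun_prop))
      (fun x hx => ⟨hx, hs⟩) 0 self_mem_Iic)
    (fun x hx => (hΨ.hasDerivWithinAt_derivWithin_slice_fst (Iio_subset_Iic_self hx) hs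
      ).hasDerivAt (Iic_mem_nhds hx)) hint hint_deriv hdecay, ← integral_const_mul]
  refine setIntegral_congr_fun measurableSet_Iic fun x hx => ?_
  rw [eq_neg_of_add_eq_zero_left (pde x hx)]
  ring

lemma integrable_cexp_mul_transport_integrand {T : ℝ} (hT : 0 < T) {Ψ : ℝ × ℝ → ℂ}
    (hΨ : ContDiffOn ℝ 1 Ψ (Iic 0 ×ˢ Icc 0 T)) (w : ℂ) {k : ℂ} (hk : 0 ≤ k.im)
    (hint : IntegrableOn (fun x => Ψ (x, 0)) (Iic 0))
    {g : ℝ → ℝ} (hg : IntegrableOn g (Iic 0))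
    (hg_bound : ∀ s ∈ Icc (0:ℝ) T, ∀ x ∈ Iic (0:ℝ),
      ‖derivWithin (fun r : ℝ => Ψ (x, r)) (Icc 0 T) s‖ ≤ g x)
    {t : ℝ} (htT : t ≤ T) :
    Integrable (fun p : ℝ × ℝ => cexp (-I * k * p.1) *
        (cexp (w * p.2) * (w * Ψ p + derivWithin (fun r : ℝ => Ψ (p.1, r)) (Icc 0 T) p.2)))
      ((volume.restrict (Iic 0)).prod (volume.restrict (Ioc 0 t))) := by
  set Dt : ℝ → ℝ → ℂ := fun x s => derivWithin (fun r : ℝ => Ψ (x, r)) (Icc 0 T) s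
  have hΨ_diff := hΨ.differentiableOn one_ne_zero
  have hΨ_bound : ∀ s ∈ Icc (0:ℝ) T, ∀ x ∈ Iic (0:ℝ), ‖Ψ (x, s)‖ ≤ ‖Ψ (x, 0)‖ + g x * T :=
    fun s hs x hx => by
      simpa using norm_le_norm_add_mul_of_norm_hasDerivWithinAt_le
        (fun r hr => hΨ_diff.hasDerivWithinAt_derivWithin_slice_snd hx hr)
        (fun r hr => hg_bound r hr x hx) hs
  have hexp_bound : ∀ s ∈ Icc (0:ℝ) T, ‖cexp (w * s)‖ ≤ Real.exp (‖w‖ * T) := fun s hs => by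
    rw [norm_exp, Real.exp_le_exp, re_mul_ofReal]
    nlinarith [re_le_norm w, norm_nonneg w, hs.1, hs.2]
  have hcont : ContinuousOn (fun p : ℝ × ℝ => cexp (-I * k * p.1) *
      (cexp (w * p.2) * (w * Ψ p + Dt p.1 p.2))) (Iic 0 ×ˢ Icc 0 T) := by
    have hexp_x : Continuous fun p : ℝ × ℝ => cexp (-I * k * p.1) := by fun_prop
    have hexp_s : Continuous fun p : ℝ × ℝ => cexp (w * p.2) := by fun_prop
    exact hexp_x.continuousOn.mul (hexp_s.continuousOn.mul ((hΨ_diff.continuousOn.const_smul w).add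
      (hΨ.continuousOn_derivWithin_slice_snd (uniqueDiffOn_Iic 0) (uniqueDiffOn_Icc hT))))
  have hsub : Iic (0:ℝ) ×ˢ Ioc 0 t ⊆ Iic 0 ×ˢ Icc 0 T :=
    prod_mono_right (Ioc_subset_Icc_self.trans (Icc_subset_Icc_right htT))
  refine integrable_prod_of_continuousOn_of_norm_le measurableSet_Iic measurableSet_Ioc
    measure_Ioc_lt_top.ne (hcont.mono hsub)
    ((((hint.norm.add (hg.mul_const T)).const_mul ‖w‖).add hg).const_mul (Real.exp (‖w‖ * T)))
    fun x hx s hs => ?_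
  have hs' : s ∈ Icc (0:ℝ) T := (hsub (show (x, s) ∈ _ from ⟨hx, hs⟩)).2
  have h_inner : ‖w * Ψ (x, s) + Dt x s‖ ≤ ‖w‖ * (‖Ψ (x, 0)‖ + g x * T) + g x := by
    refine (norm_add_le _ _).trans ?_
    rw [norm_mul]
    gcongr
    exacts [hΨ_bound s hs' x hx, hg_bound s hs' x hx]
  calc ‖cexp (-I * k * x) * (cexp (w * s) * (w * Ψ (x, s) + Dt x s))‖
      ≤ 1 * (Real.exp (‖w‖ * T) * (‖w‖ * (‖Ψ (x, 0)‖ + g x * T) + g x)) := by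
        simp only [norm_mul]
        gcongr
        exacts [norm_cexp_neg_I_mul_le_one hk hx, hexp_bound s hs']
    _ = _ := by simp

theorem transport_fourierIic_relation {T : ℝ} (hT : 0 < T) {Ψ : ℝ × ℝ → ℂ}
    (hΨ : ContDiffOn ℝ 1 Ψ (Iic 0 ×ˢ Icc 0 T)) (c : ℂ)
    (pde : ∀ x ∈ Iic (0:ℝ), ∀ t ∈ Icc (0:ℝ) T,
      derivWithin (fun s : ℝ => Ψ (x, s)) (Icc 0 T) t
        + c * derivWithin (fun y : ℝ => Ψ (y, t)) (Iic 0) x = 0)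
    (hint : ∀ s ∈ Icc (0:ℝ) T, IntegrableOn (fun x => Ψ (x, s)) (Iic 0))
    (hint_deriv : ∀ s ∈ Icc (0:ℝ) T,
      IntegrableOn (fun x => derivWithin (fun y : ℝ => Ψ (y, s)) (Iic 0) x) (Iic 0))
    (hdecay : ∀ s ∈ Icc (0:ℝ) T, Tendsto (fun x => Ψ (x, s)) atBot (𝓝 0))
    {g : ℝ → ℝ} (hg : IntegrableOn g (Iic 0))
    (hg_bound : ∀ s ∈ Icc (0:ℝ) T, ∀ x ∈ Iic (0:ℝ),
      ‖derivWithin (fun r : ℝ => Ψ (x, r)) (Icc 0 T) s‖ ≤ g x)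
    {k : ℂ} (hk : 0 ≤ k.im) {t : ℝ} (ht : t ∈ Icc 0 T) :
    cexp (c * I * k * t) * fourierIic k (fun x => Ψ (x, t)) - fourierIic k (fun x => Ψ (x, 0))
      = -c * ∫ s in (0:ℝ)..t, cexp (c * I * k * s) * Ψ (0, s) := by
  set w := c * I * k
  set Dt : ℝ → ℝ → ℂ := fun x s => derivWithin (fun r : ℝ => Ψ (x, r)) (Icc 0 T) s
  set H : ℝ × ℝ → ℂ := fun p => cexp (-I * k * p.1) * (cexp (w * p.2) * (w * Ψ p + Dt p.1 p.2))
  have hΨ_diff := hΨ.differentiableOn one_ne_zero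
  have h0 : (0:ℝ) ∈ Icc 0 T := ⟨le_rfl, hT.le⟩
  have hIcc : Icc 0 t ⊆ Icc 0 T := Icc_subset_Icc_right ht.2
  have htime : ∀ x ∈ Iic (0:ℝ), ∫ s in (0:ℝ)..t, cexp (w * s) * (w * Ψ (x, s) + Dt x s)
      = cexp (w * t) * Ψ (x, t) - Ψ (x, 0) := fun x hx => by
    simpa using integral_cexp_mul_mul_add_deriv ht.1 w
      (fun s hs => (hΨ_diff.hasDerivWithinAt_derivWithin_slice_snd hx (hIcc hs)).mono hIcc)
      ((hΨ.continuousOn_derivWithin_slice_snd (uniqueDiffOn_Iic 0) (uniqueDiffOn_Icc hT)).comp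
        (Continuous.continuousOn (f := fun s : ℝ => (x, s)) (by fun_prop))
        fun s hs => ⟨hx, hIcc hs⟩)
  have hF : ∀ s ∈ Icc (0:ℝ) T,
      IntegrableOn (fun x : ℝ => cexp (-I * k * x) * Ψ (x, s)) (Iic 0) :=
    fun s hs => integrableOn_Iic_cexp_mul hk (hint s hs)
  calc cexp (w * t) * fourierIic k (fun x => Ψ (x, t)) - fourierIic k (fun x => Ψ (x, 0))
      = ∫ x in Iic (0:ℝ), cexp (-I * k * x) * (cexp (w * t) * Ψ (x, t) - Ψ (x, 0)) := by
        rw [fourierIic, fourierIic, ← integral_const_mul,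
          ← integral_sub ((hF t ht).const_mul _) (hF 0 h0)]
        congr 1 with x
        ring
    _ = ∫ x in Iic (0:ℝ), ∫ s in Ioc 0 t, H (x, s) := by
        refine setIntegral_congr_fun measurableSet_Iic fun x hx => ?_
        rw [← htime x hx, intervalIntegral.integral_of_le ht.1, ← integral_const_mul]
    _ = ∫ s in Ioc 0 t, ∫ x in Iic (0:ℝ), H (x, s) :=
        integral_integral_swap (integrable_cexp_mul_transport_integrand hT hΨ w hk (hint 0 h0)
          hg hg_bound ht.2)
    _ = ∫ s in Ioc 0 t, cexp (w * s) * (-c * Ψ (0, s)) := by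
        refine setIntegral_congr_fun measurableSet_Ioc fun s hs => ?_
        have hs' : s ∈ Icc 0 T := hIcc (Ioc_subset_Icc_self hs)
        rw [← integral_Iic_cexp_mul_transport_eq hΨ_diff c hk hs' (fun x hx => pde x hx s hs')
          (hint s hs') (hint_deriv s hs') (hdecay s hs'), ← integral_const_mul]
        congr 1 with x
        simp only [H]
        ring
    _ = -c * ∫ s in (0:ℝ)..t, cexp (w * s) * Ψ (0, s) := by
        rw [intervalIntegral.integral_of_le ht.1, ← integral_const_mul]
        congr 1 with s
        ring

/-- Global relations for the massless Dirac system (two decoupled transport equations)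
on the negative half-line `(-∞,0]` up to time `T`, valid for every `k ∈ ℂ` with
`Im k ≥ 0`. -/
theorem massless_dirac_global_relations_neg_halfline
    (T : ℝ) (hT : 0 < T)
    (Ψ₁ Ψ₂ : ℝ × ℝ → ℂ)
    (hΨ₁ : ContDiffOn ℝ 1 Ψ₁ (Set.Iic 0 ×ˢ Set.Icc 0 T))
    (hΨ₂ : ContDiffOn ℝ 1 Ψ₂ (Set.Iic 0 ×ˢ Set.Icc 0 T))
    (pde₁ : ∀ x ∈ Set.Iic (0:ℝ), ∀ t ∈ Set.Icc (0:ℝ) T,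
        derivWithin (fun s : ℝ => Ψ₁ (x, s)) (Set.Icc 0 T) t
          + derivWithin (fun y : ℝ => Ψ₁ (y, t)) (Set.Iic 0) x = 0)
    (pde₂ : ∀ x ∈ Set.Iic (0:ℝ), ∀ t ∈ Set.Icc (0:ℝ) T,
        derivWithin (fun s : ℝ => Ψ₂ (x, s)) (Set.Icc 0 T) t
          - derivWithin (fun y : ℝ => Ψ₂ (y, t)) (Set.Iic 0) x = 0)
    (hint : ∀ Ψ ∈ [Ψ₁, Ψ₂], ∀ s ∈ Set.Icc (0:ℝ) T,
        IntegrableOn (fun x => Ψ (x, s)) (Set.Iic 0) ∧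
        IntegrableOn (fun x => derivWithin (fun y : ℝ => Ψ (y, s)) (Set.Iic 0) x)
          (Set.Iic 0))
    (hdecay : ∀ Ψ ∈ [Ψ₁, Ψ₂], ∀ s ∈ Set.Icc (0:ℝ) T,
        Tendsto (fun x => Ψ (x, s)) atBot (nhds 0))
    (hdom : ∀ Ψ ∈ [Ψ₁, Ψ₂], ∃ g : ℝ → ℝ, IntegrableOn g (Set.Iic 0) ∧
        ∀ s ∈ Set.Icc (0:ℝ) T, ∀ x ∈ Set.Iic (0:ℝ),
          ‖derivWithin (fun r : ℝ => Ψ (x, r)) (Set.Icc 0 T) s‖ ≤ g x) :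
    ∀ k : ℂ, 0 ≤ k.im → ∀ t ∈ Set.Icc (0:ℝ) T,
      ((∫ x in Set.Iic (0:ℝ), Complex.exp (-Complex.I * k * x) * Ψ₁ (x, 0))
        - Complex.exp (Complex.I * k * t) *
            (∫ x in Set.Iic (0:ℝ), Complex.exp (-Complex.I * k * x) * Ψ₁ (x, t))
        - (∫ s in (0:ℝ)..t, Complex.exp (Complex.I * k * s) * Ψ₁ (0, s)) = 0) ∧
      ((∫ x in Set.Iic (0:ℝ), Complex.exp (-Complex.I * k * x) * Ψ₂ (x, 0))
        - Complex.exp (-Complex.I * k * t) *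
            (∫ x in Set.Iic (0:ℝ), Complex.exp (-Complex.I * k * x) * Ψ₂ (x, t))
        + (∫ s in (0:ℝ)..t, Complex.exp (-Complex.I * k * s) * Ψ₂ (0, s)) = 0) := by
  intro k hk t ht
  have h₁ : Ψ₁ ∈ [Ψ₁, Ψ₂] := by simp
  have h₂ : Ψ₂ ∈ [Ψ₁, Ψ₂] := by simp
  obtain ⟨g₁, hg₁, hg₁_bound⟩ := hdom Ψ₁ h₁
  obtain ⟨g₂, hg₂, hg₂_bound⟩ := hdom Ψ₂ h₂
  have rel₁ := transport_fourierIic_relation hT hΨ₁ 1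
    (fun x hx s hs => by linear_combination pde₁ x hx s hs)
    (fun s hs => (hint Ψ₁ h₁ s hs).1) (fun s hs => (hint Ψ₁ h₁ s hs).2) (hdecay Ψ₁ h₁)
    hg₁ hg₁_bound hk ht
  have rel₂ := transport_fourierIic_relation hT hΨ₂ (-1)
    (fun x hx s hs => by linear_combination pde₂ x hx s hs)
    (fun s hs => (hint Ψ₂ h₂ s hs).1) (fun s hs => (hint Ψ₂ h₂ s hs).2) (hdecay Ψ₂ h₂)
    hg₂ hg₂_bound hk ht
  simp only [fourierIic, one_mul, neg_one_mul] at rel₁ rel₂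
  exact ⟨by linear_combination -rel₁, by linear_combination -rel₂⟩
end
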